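/- arXiv:2003.07700 — 6 statements merged into one kernel-verified Lean document; each statement's English description precedes it below -/
import Mathlib

section
/- Let (X,ρ) be a metric space and {A_k} a bounded sequence of nonempty closed subsets of X. Let λ = {λ(n)} be a strictly increasing sequence of positive integers with limsup_{n→∞} λ(n+1)/λ(n) = 1. If {A_k} is Wijsman C_λ summable to A, then {A_k} is Wijsman Cesàro (C_1) summable to A. -/
/-!
For each point `x` the statement concerns only the bounded real sequence `d k = d(x, A_k)`.
Given `n`, let `m` be the last index with `λ(m) ≤ n`. Since `λ(m+1)/λ(m) → 1`, also `λ(m)/n → 1`,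
so the mean over `[1, n]` is `λ(m)/n` times the mean over `[1, λ(m)]` plus the contribution of
the `n - λ(m) = o(n)` remaining terms, each bounded by `sup |d k|`.
-/

open Filter Metric

noncomputable def cesaroMean (d : ℕ → ℝ) (n : ℕ) : ℝ :=
  (1 / (n : ℝ)) * ∑ k ∈ Finset.Icc 1 n, d k

lemma cesaroMean_eq_add {d : ℕ → ℝ} {a n : ℕ} (ha : 0 < a) (han : a ≤ n) :
    cesaroMean d n =
      (a / n : ℝ) * cesaroMean d a + (1 / (n : ℝ)) * ∑ k ∈ Finset.Ioc a n, d k := by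
  have hIcc (b : ℕ) : Finset.Icc 1 b = Finset.Ioc 0 b := Finset.Icc_add_one_left_eq_Ioc 0 b
  have hsplit := Finset.sum_Ioc_consecutive d (Nat.zero_le a) han
  have : (a : ℝ) ≠ 0 := by positivity
  simp only [cesaroMean, hIcc, ← hsplit]
  field_simp

lemma abs_sum_Ioc_le {d : ℕ → ℝ} {M : ℝ} (hd : ∀ k, |d k| ≤ M) {a n : ℕ} (han : a ≤ n) :
    |∑ k ∈ Finset.Ioc a n, d k| ≤ (n - a : ℝ) * M :=
  calc |∑ k ∈ Finset.Ioc a n, d k| ≤ ∑ k ∈ Finset.Ioc a n, |d k| :=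
        Finset.abs_sum_le_sum_abs _ _
    _ ≤ (Finset.Ioc a n).card • M := Finset.sum_le_card_nsmul _ _ _ fun k _ => hd k
    _ = (n - a : ℝ) * M := by rw [Nat.card_Ioc, nsmul_eq_mul, Nat.cast_sub han]

lemma tendsto_ratio_of_limsup_eq_one {l : ℕ → ℕ} (hl : StrictMono l)
    (hlim : limsup (fun n => (l (n + 1) : ℝ) / l n) atTop = 1) :
    Tendsto (fun n => (l (n + 1) : ℝ) / l n) atTop (nhds 1) := by
  have hbdd : IsBoundedUnder (· ≤ ·) atTop (fun n => (l (n + 1) : ℝ) / l n) := by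
    -- in `ℝ` the `limsup` of a sequence that is not bounded above is the junk value `0`
    by_contra h
    simp [Real.limsup_of_not_isBoundedUnder h] at hlim
  refine tendsto_order.2 ⟨fun a ha => ?_, fun b hb => eventually_lt_of_limsup_lt (hlim ▸ hb) hbdd⟩
  filter_upwards [eventually_ge_atTop 1] with n hn
  have hpos : (0 : ℝ) < l n := by exact_mod_cast hn.trans hl.le_apply
  exact ha.trans_le <| (one_le_div hpos).2 <| by exact_mod_cast (hl n.lt_succ_self).le

def lastIndexLE (l : ℕ → ℕ) (n : ℕ) : ℕ := Nat.findGreatest (fun k => l k ≤ n) n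

section lastIndexLE

variable {l : ℕ → ℕ}

lemma apply_lastIndexLE_le {n : ℕ} (hn : l 0 ≤ n) : l (lastIndexLE l n) ≤ n :=
  Nat.findGreatest_spec (P := fun k => l k ≤ n) (Nat.zero_le n) hn

lemma lt_apply_lastIndexLE_succ (hl : StrictMono l) (n : ℕ) : n < l (lastIndexLE l n + 1) := by
  by_contra! h
  have hle : lastIndexLE l n + 1 ≤ n := hl.le_apply.trans h
  exact Nat.findGreatest_is_greatest (P := fun k => l k ≤ n) (Nat.lt_succ_self _) hle h

lemma tendsto_lastIndexLE (hl : StrictMono l) : Tendsto (lastIndexLE l) atTop atTop :=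
  tendsto_atTop_atTop.2 fun k => ⟨l k, fun n hn =>
    Nat.le_findGreatest (P := fun k => l k ≤ n) (hl.le_apply.trans hn) hn⟩

lemma tendsto_apply_lastIndexLE_div (hl : StrictMono l)
    (hratio : Tendsto (fun n => (l (n + 1) : ℝ) / l n) atTop (nhds 1)) :
    Tendsto (fun n => (l (lastIndexLE l n) : ℝ) / n) atTop (nhds 1) := by
  have hlower : Tendsto (fun n => (l (lastIndexLE l n) : ℝ) / l (lastIndexLE l n + 1))
      atTop (nhds 1) := by
    simpa using (hratio.comp (tendsto_lastIndexLE hl)).inv₀ one_ne_zero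
  refine tendsto_of_tendsto_of_tendsto_of_le_of_le' hlower tendsto_const_nhds ?_ ?_
  · filter_upwards [eventually_gt_atTop 0] with n hn
    exact div_le_div_of_nonneg_left (Nat.cast_nonneg _) (by exact_mod_cast hn)
      (by exact_mod_cast (lt_apply_lastIndexLE_succ hl n).le)
  · filter_upwards [eventually_ge_atTop (l 0)] with n hn
    exact div_le_one_of_le₀ (by exact_mod_cast apply_lastIndexLE_le hn) (Nat.cast_nonneg _)

end lastIndexLE

theorem tendsto_cesaroMean_of_tendsto_comp {d : ℕ → ℝ} {M L : ℝ} (hd : ∀ k, |d k| ≤ M)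
    {l : ℕ → ℕ} (hl : StrictMono l)
    (hratio : Tendsto (fun n => (l (n + 1) : ℝ) / l n) atTop (nhds 1))
    (hsub : Tendsto (fun n => cesaroMean d (l n)) atTop (nhds L)) :
    Tendsto (cesaroMean d) atTop (nhds L) := by
  set μ := lastIndexLE l
  have hfrac := tendsto_apply_lastIndexLE_div hl hratio
  have htail : Tendsto (fun n : ℕ => (1 / (n : ℝ)) * ∑ k ∈ Finset.Ioc (l (μ n)) n, d k)
      atTop (nhds 0) := by
    have hbound : Tendsto (fun n : ℕ => (1 - (l (μ n) : ℝ) / n) * M) atTop (nhds 0) := by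
      simpa using ((tendsto_const_nhds (x := (1 : ℝ))).sub hfrac).mul_const M
    refine squeeze_zero_norm' ?_ hbound
    filter_upwards [eventually_ge_atTop (l 0), eventually_gt_atTop 0] with n hn hn0
    have hn0' : (0 : ℝ) < n := by exact_mod_cast hn0
    rw [Real.norm_eq_abs, abs_mul, abs_of_pos (one_div_pos.2 hn0'), one_sub_div hn0'.ne',
      one_div_mul_eq_div, div_mul_eq_mul_div, div_le_div_iff_of_pos_right hn0']
    exact abs_sum_Ioc_le hd (apply_lastIndexLE_le hn)
  have hmain := (hfrac.mul (hsub.comp (tendsto_lastIndexLE hl))).add htail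
  rw [one_mul, add_zero] at hmain
  refine hmain.congr' ?_
  filter_upwards [eventually_ge_atTop (l 0), (tendsto_lastIndexLE hl).eventually_ge_atTop 1]
    with n hn hμ
  exact (cesaroMean_eq_add (hμ.trans hl.le_apply) (apply_lastIndexLE_le hn)).symm

theorem stmt_0_general {X : Type*} [MetricSpace X] (A : ℕ → Set X) (S : Set X)
    (hbdd : ∀ x : X, ∃ M : ℝ, ∀ k, infDist x (A k) ≤ M)
    (l : ℕ → ℕ) (hl : StrictMono l)
    (hlim : Filter.limsup (fun n => (l (n + 1) : ℝ) / (l n : ℝ)) atTop = 1)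
    (hsum : ∀ x : X, Tendsto
      (fun n => (1 / (l n : ℝ)) * ∑ k ∈ Finset.Icc 1 (l n), infDist x (A k))
      atTop (nhds (infDist x S))) :
    ∀ x : X, Tendsto
      (fun (n : ℕ) => (1 / (n : ℝ)) * ∑ k ∈ Finset.Icc 1 n, infDist x (A k))
      atTop (nhds (infDist x S)) := by
  intro x
  obtain ⟨M, hM⟩ := hbdd x
  have hd (k : ℕ) : |infDist x (A k)| ≤ M := (abs_of_nonneg infDist_nonneg).trans_le (hM k)
  exact tendsto_cesaroMean_of_tendsto_comp hd hl (tendsto_ratio_of_limsup_eq_one hl hlim) (hsum x)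

theorem stmt_0 {X : Type*} [MetricSpace X] (A : ℕ → Set X) (S : Set X)
    (hA : ∀ k, (A k).Nonempty ∧ IsClosed (A k)) (hS : S.Nonempty) (hSc : IsClosed S)
    (hbdd : ∀ x : X, ∃ M : ℝ, ∀ k, infDist x (A k) ≤ M)
    (l : ℕ → ℕ) (hl : StrictMono l) (hl1 : ∀ n, 1 ≤ l n)
    (hlim : Filter.limsup (fun n => (l (n + 1) : ℝ) / (l n : ℝ)) atTop = 1)
    (hsum : ∀ x : X, Tendsto
      (fun n => (1 / (l n : ℝ)) * ∑ k ∈ Finset.Icc 1 (l n), infDist x (A k))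
      atTop (nhds (infDist x S))) :
    ∀ x : X, Tendsto
      (fun (n : ℕ) => (1 / (n : ℝ)) * ∑ k ∈ Finset.Icc 1 n, infDist x (A k))
      atTop (nhds (infDist x S)) :=
  stmt_0_general A S hbdd l hl hlim hsum
end

section
/- Let (X,ρ) be a metric space and {A_k} a sequence of nonempty closed subsets of X. Let λ = {λ(n)} be a strictly increasing sequence of positive integers with λ(0) = 0. If {A_k} is Wijsman D_λ summable to A, then {A_k} is Wijsman C_λ summable to A. -/
/-!
Cutting `(0, λ(n)]` into the blocks `(λ(j), λ(j+1)]`, `j < n`, turns the `C_λ` mean into the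
ratio `(∑_{j<n} b_j) / (∑_{j<n} g_j)` of the block sums `b_j` and block lengths `g_j`, while the
`D_λ` mean is `b_j / g_j`. Since `g_j > 0` and `∑_{j<n} g_j = λ(n) → ∞`, the Stolz–Cesàro
theorem gives the claim for each fixed `x`.
-/

open Filter Metric Finset Topology

theorem tendsto_sum_range_div_sum_range_of_tendsto_div {b g : ℕ → ℝ} {L : ℝ}
    (hg : ∀ j, 0 < g j)
    (hgs : Tendsto (fun n => ∑ j ∈ range n, g j) atTop atTop)
    (h : Tendsto (fun j => b j / g j) atTop (𝓝 L)) :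
    Tendsto (fun n => (∑ j ∈ range n, b j) / ∑ j ∈ range n, g j) atTop (𝓝 L) := by
  have hlo : (fun j => b j - L * g j) =o[atTop] g := by
    rw [Asymptotics.isLittleO_iff_tendsto fun j hj => absurd hj (hg j).ne']
    have hsub := h.sub_const L
    rw [sub_self] at hsub
    refine hsub.congr fun j => ?_
    field_simp [(hg j).ne']
  have hsum := (hlo.sum_range (fun j => (hg j).le) hgs).tendsto_div_nhds_zero.add_const L
  rw [zero_add] at hsum
  refine hsum.congr' ?_
  filter_upwards [hgs.eventually_gt_atTop 0] with n hn
  rw [sum_sub_distrib, ← mul_sum]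
  field_simp
  ring

theorem Finset.sum_Ioc_eq_sum_range_sum_Ioc {M : Type*} [AddCommMonoid M] (f : ℕ → M)
    {l : ℕ → ℕ} (hl : Monotone l) (n : ℕ) :
    ∑ k ∈ Ioc (l 0) (l n), f k = ∑ j ∈ range n, ∑ k ∈ Ioc (l j) (l (j + 1)), f k := by
  induction n with
  | zero => simp
  | succ n ih =>
    rw [sum_range_succ, ← ih, sum_Ioc_consecutive f (hl n.zero_le) (hl n.le_succ)]

theorem tendsto_cesaro_of_tendsto_block_average {f : ℕ → ℝ} {l : ℕ → ℕ} {L : ℝ}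
    (hl : StrictMono l) (hl0 : l 0 = 0)
    (h : Tendsto
      (fun n => (1 / ((l (n + 1) : ℝ) - l n)) * ∑ k ∈ Icc (l n + 1) (l (n + 1)), f k)
      atTop (𝓝 L)) :
    Tendsto (fun n => (1 / (l n : ℝ)) * ∑ k ∈ Icc 1 (l n), f k) atTop (𝓝 L) := by
  have hg : ∀ j, 0 < (l (j + 1) : ℝ) - l j :=
    fun j => sub_pos.2 (Nat.cast_lt.2 (hl j.lt_succ_self))
  have hgs : ∀ n, ∑ j ∈ range n, ((l (j + 1) : ℝ) - l j) = l n := by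
    intro n
    rw [sum_range_sub (fun j => (l j : ℝ)), hl0, Nat.cast_zero, sub_zero]
  have hbs : ∀ n, ∑ j ∈ range n, ∑ k ∈ Icc (l j + 1) (l (j + 1)), f k =
      ∑ k ∈ Icc 1 (l n), f k := by
    intro n
    simp_rw [Icc_add_one_left_eq_Ioc]
    rw [← sum_Ioc_eq_sum_range_sum_Ioc f hl.monotone, hl0, ← Icc_add_one_left_eq_Ioc, zero_add]
  have hlim : Tendsto (fun n => (l n : ℝ)) atTop atTop :=
    tendsto_natCast_atTop_atTop.comp hl.tendsto_atTop
  simp_rw [one_div_mul_eq_div] at h ⊢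
  simpa only [hgs, hbs] using
    tendsto_sum_range_div_sum_range_of_tendsto_div hg (by simpa only [hgs] using hlim) h

theorem stmt_3_general {X : Type*} [MetricSpace X] (A : ℕ → Set X) (S : Set X)
    (l : ℕ → ℕ) (hl : StrictMono l) (hl0 : l 0 = 0)
    (hD : ∀ x : X, Tendsto
      (fun n => (1 / ((l (n + 1) : ℝ) - (l n : ℝ))) *
        ∑ k ∈ Finset.Icc (l n + 1) (l (n + 1)), infDist x (A k))
      atTop (nhds (infDist x S))) :
    ∀ x : X, Tendsto
      (fun n => (1 / (l n : ℝ)) * ∑ k ∈ Finset.Icc 1 (l n), infDist x (A k))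
      atTop (nhds (infDist x S)) :=
  fun x => tendsto_cesaro_of_tendsto_block_average hl hl0 (hD x)

theorem stmt_3 {X : Type*} [MetricSpace X] (A : ℕ → Set X) (S : Set X)
    (hA : ∀ k, (A k).Nonempty ∧ IsClosed (A k)) (hS : S.Nonempty) (hSc : IsClosed S)
    (l : ℕ → ℕ) (hl : StrictMono l) (hl0 : l 0 = 0)
    (hD : ∀ x : X, Tendsto
      (fun n => (1 / ((l (n + 1) : ℝ) - (l n : ℝ))) *
        ∑ k ∈ Finset.Icc (l n + 1) (l (n + 1)), infDist x (A k))
      atTop (nhds (infDist x S))) :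
    ∀ x : X, Tendsto
      (fun n => (1 / (l n : ℝ)) * ∑ k ∈ Finset.Icc 1 (l n), infDist x (A k))
      atTop (nhds (infDist x S)) :=
  stmt_3_general A S l hl hl0 hD
end

section
/- Let (X,ρ) be a metric space, λ = {λ(n)} a strictly increasing sequence of positive integers with λ(0) = 0 and liminf_{n→∞} λ(n)/λ(n−1) > 1. Then for any sequence {A_k} of nonempty closed subsets of X: if {A_k} is Wijsman C_λ summable to A, then {A_k} is Wijsman D_λ summable to A. -/
/-!
With `a n = (λ n)⁻¹ • s n` for the partial sums `s n = ∑_{k ≤ λ n} d(x, A_k)`, the block average is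
`(λ (n+1) - λ n)⁻¹ • (s (n+1) - s n) = a (n+1) + (λ n / (λ (n+1) - λ n)) • (a (n+1) - a n)`.
The liminf condition gives `c > 1` with `λ (n+1) > c λ n` eventually, so the coefficient is
bounded by `(c - 1)⁻¹`, while `a (n+1) - a n → 0`; hence the block averages have the limit of `a`.
-/

open Filter Metric Topology

theorem exists_one_lt_eventually_mul_lt_of_one_lt_liminf {u : ℕ → ℝ} (hu : ∀ n, 0 ≤ u n)
    (h : 1 < liminf (fun n => u (n + 1) / u n) atTop) :
    ∃ c, 1 < c ∧ ∀ᶠ n in atTop, 0 < u n ∧ c * u n < u (n + 1) := by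
  obtain ⟨c, hc1, hc⟩ := exists_between h
  have hbdd : IsBoundedUnder (· ≥ ·) atTop (fun n => u (n + 1) / u n) :=
    isBoundedUnder_of ⟨0, fun n => div_nonneg (hu _) (hu _)⟩
  refine ⟨c, hc1, (eventually_lt_of_lt_liminf hc hbdd).mono fun n hn => ?_⟩
  -- if `u n = 0` the ratio is the junk value `0`, which is not above `c > 1`
  have hpos : 0 < u n := (hu n).lt_of_ne fun h0 => by
    rw [← h0, div_zero] at hn
    linarith
  exact ⟨hpos, (lt_div_iff₀ hpos).mp hn⟩

theorem Finset.sum_Icc_add_one_eq_sub {M : Type*} [AddCommGroup M] (f : ℕ → M) {m n : ℕ}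
    (hmn : m ≤ n) :
    ∑ k ∈ Icc (m + 1) n, f k = ∑ k ∈ Icc 1 n, f k - ∑ k ∈ Icc 1 m, f k := by
  have h := sum_Ioc_consecutive f m.zero_le hmn
  simp only [← Icc_add_one_left_eq_Ioc, zero_add] at h
  rw [eq_sub_iff_add_eq', h]

theorem tendsto_inv_sub_smul_sub_of_tendsto_inv_smul {E : Type*} [NormedAddCommGroup E]
    [NormedSpace ℝ E] {s : ℕ → E} {u : ℕ → ℝ} {c : ℝ} {L : E} (hc : 1 < c)
    (hu : ∀ᶠ n in atTop, 0 < u n ∧ c * u n < u (n + 1))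
    (hs : Tendsto (fun n => (u n)⁻¹ • s n) atTop (𝓝 L)) :
    Tendsto (fun n => (u (n + 1) - u n)⁻¹ • (s (n + 1) - s n)) atTop (𝓝 L) := by
  set a := fun n => (u n)⁻¹ • s n
  have ha_succ : Tendsto (fun n => a (n + 1)) atTop (𝓝 L) := hs.comp (tendsto_add_atTop_nat 1)
  have hdiff : Tendsto (fun n => a (n + 1) - a n) atTop (𝓝 0) := by
    simpa using ha_succ.sub hs
  have hbdd : IsBoundedUnder (· ≤ ·) atTop (norm ∘ fun n => u n / (u (n + 1) - u n)) := by
    refine isBoundedUnder_of_eventually_le (a := (c - 1)⁻¹) (hu.mono fun n ⟨hpos, hlt⟩ => ?_)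
    have hgap : 0 < u (n + 1) - u n := by nlinarith
    rw [Function.comp_apply, Real.norm_of_nonneg (div_nonneg hpos.le hgap.le),
      div_le_iff₀ hgap, inv_mul_eq_div, le_div_iff₀ (by linarith)]
    nlinarith
  have hblock : ∀ᶠ n in atTop, a (n + 1) + (u n / (u (n + 1) - u n)) • (a (n + 1) - a n) =
      (u (n + 1) - u n)⁻¹ • (s (n + 1) - s n) := by
    filter_upwards [hu] with n ⟨hpos, hlt⟩
    have hgap : u (n + 1) - u n ≠ 0 := by nlinarith
    have hpos' : u (n + 1) ≠ 0 := by nlinarith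
    simp only [a]
    match_scalars <;> field_simp
    ring
  simpa using (ha_succ.add (hbdd.smul_tendsto_zero hdiff)).congr' hblock

theorem stmt_4_general {X : Type*} [MetricSpace X] (A : ℕ → Set X) (S : Set X)
    (l : ℕ → ℕ)
    (hliminf : 1 < Filter.liminf (fun n => (l (n + 1) : ℝ) / (l n : ℝ)) atTop)
    (hC : ∀ x : X, Tendsto
      (fun n => (1 / (l n : ℝ)) * ∑ k ∈ Finset.Icc 1 (l n), infDist x (A k))
      atTop (nhds (infDist x S))) :
    ∀ x : X, Tendsto
      (fun n => (1 / ((l (n + 1) : ℝ) - (l n : ℝ))) *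
        ∑ k ∈ Finset.Icc (l n + 1) (l (n + 1)), infDist x (A k))
      atTop (nhds (infDist x S)) := by
  intro x
  obtain ⟨c, hc, hl⟩ :=
    exists_one_lt_eventually_mul_lt_of_one_lt_liminf (fun n => (l n).cast_nonneg) hliminf
  have hCx : Tendsto (fun n => (l n : ℝ)⁻¹ • ∑ k ∈ Finset.Icc 1 (l n), infDist x (A k))
      atTop (𝓝 (infDist x S)) := by
    simpa only [one_div, smul_eq_mul] using hC x
  refine (tendsto_inv_sub_smul_sub_of_tendsto_inv_smul hc hl hCx).congr'
    (hl.mono fun n ⟨_, hlt⟩ => ?_)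
  have hmono : l n ≤ l (n + 1) := by exact_mod_cast (by nlinarith : (l n : ℝ) ≤ l (n + 1))
  simp only [one_div, smul_eq_mul, Finset.sum_Icc_add_one_eq_sub _ hmono]

theorem stmt_4 {X : Type*} [MetricSpace X] (A : ℕ → Set X) (S : Set X)
    (hA : ∀ k, (A k).Nonempty ∧ IsClosed (A k)) (hS : S.Nonempty) (hSc : IsClosed S)
    (l : ℕ → ℕ) (hl : StrictMono l) (hl0 : l 0 = 0)
    (hliminf : 1 < Filter.liminf (fun n => (l (n + 1) : ℝ) / (l n : ℝ)) atTop)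
    (hC : ∀ x : X, Tendsto
      (fun n => (1 / (l n : ℝ)) * ∑ k ∈ Finset.Icc 1 (l n), infDist x (A k))
      atTop (nhds (infDist x S))) :
    ∀ x : X, Tendsto
      (fun n => (1 / ((l (n + 1) : ℝ) - (l n : ℝ))) *
        ∑ k ∈ Finset.Icc (l n + 1) (l (n + 1)), infDist x (A k))
      atTop (nhds (infDist x S)) :=
  stmt_4_general A S l hliminf hC
end

section
/- Let (X,ρ) be a metric space, {A_k} a bounded sequence of nonempty closed subsets of X, and λ = {λ(n)} a strictly increasing sequence of positive integers with limsup_{n→∞} λ(n+1)/λ(n) = 1. Then {A_k} is Wijsman statistically convergent to A if and only if {A_k} is Wijsman C_λ statistically convergent to A. -/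
/-!
Only the density of the exceptional index set matters, so the theorem is a statement about a
monotone counting function `c`. Along `λ` the ratio `c n / n` is a subsequence; conversely, if
`λ m ≤ n < λ (m + 1)` then `c n / n ≤ c (λ (m + 1)) / λ m`, and `λ (m + 1) ≤ 2 λ m` eventually
because the limsup of `λ (n + 1) / λ n` is `1`.
-/

open Filter Metric Topology Finset

namespace StrictMono

/-- The index `m` of the block `[l m, l (m + 1))` containing `n`. -/
def blockIndex (l : ℕ → ℕ) (n : ℕ) : ℕ :=
  Nat.findGreatest (fun m => l m ≤ n) n

variable {l : ℕ → ℕ}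

theorem le_blockIndex (hl : StrictMono l) {M n : ℕ} (h : l M ≤ n) : M ≤ blockIndex l n :=
  Nat.le_findGreatest (hl.le_apply.trans h) h

theorem apply_blockIndex_le {n : ℕ} (h : l 0 ≤ n) : l (blockIndex l n) ≤ n :=
  Nat.findGreatest_spec (P := fun m => l m ≤ n) (Nat.zero_le n) h

theorem lt_apply_blockIndex_succ (hl : StrictMono l) (n : ℕ) : n < l (blockIndex l n + 1) := by
  by_contra! h
  exact (le_blockIndex hl h).not_gt (Nat.lt_succ_self _)

theorem tendsto_blockIndex (hl : StrictMono l) : Tendsto (blockIndex l) atTop atTop :=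
  Filter.tendsto_atTop.2 fun M => eventually_atTop.2 ⟨l M, fun _ hn => le_blockIndex hl hn⟩

theorem eventually_apply_succ_le_mul (hl : StrictMono l)
    (hlim : limsup (fun n => (l (n + 1) : ℝ) / l n) atTop = 1) {b : ℝ} (hb : 1 < b) :
    ∀ᶠ n in atTop, (l (n + 1) : ℝ) ≤ b * l n := by
  -- an unbounded limsup would be `sInf ∅ = 0`
  have hbdd : IsBoundedUnder (· ≤ ·) atTop fun n => (l (n + 1) : ℝ) / l n := by
    by_contra h
    simp [Real.limsup_of_not_isBoundedUnder h] at hlim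
  filter_upwards [eventually_lt_of_limsup_lt (hlim ▸ hb) hbdd, eventually_ge_atTop 1]
    with n hn hn1
  have hpos : (0 : ℝ) < l n := by exact_mod_cast hn1.trans hl.le_apply
  exact ((div_lt_iff₀ hpos).1 hn).le

end StrictMono

open StrictMono

theorem tendsto_div_of_tendsto_comp_div {c : ℕ → ℝ} (hc : Monotone c) (hc0 : ∀ n, 0 ≤ c n)
    {l : ℕ → ℕ} (hl : StrictMono l) {C : ℝ} (hC : ∀ᶠ m in atTop, (l (m + 1) : ℝ) ≤ C * l m)
    (h : Tendsto (fun m => c (l m) / l m) atTop (𝓝 0)) :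
    Tendsto (fun n => c n / n) atTop (𝓝 0) := by
  have hupper : Tendsto (fun n => C * (c (l (blockIndex l n + 1)) / l (blockIndex l n + 1)))
      atTop (𝓝 0) := by
    simpa using (h.comp ((tendsto_add_atTop_nat 1).comp (tendsto_blockIndex hl))).const_mul C
  refine tendsto_of_tendsto_of_tendsto_of_le_of_le' tendsto_const_nhds hupper
    (Eventually.of_forall fun n => div_nonneg (hc0 n) n.cast_nonneg) ?_
  filter_upwards [(tendsto_blockIndex hl).eventually (hC.and (eventually_ge_atTop 1)),
    eventually_ge_atTop (l 0)] with n ⟨hCm, hm1⟩ hn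
  set m := blockIndex l n
  have hlm_pos : (0 : ℝ) < l m := by exact_mod_cast hm1.trans hl.le_apply
  have hlm_le : (l m : ℝ) ≤ n := by exact_mod_cast apply_blockIndex_le hn
  have hlm1_pos : (0 : ℝ) < l (m + 1) := hlm_pos.trans (by exact_mod_cast hl m.lt_succ_self)
  have hquot_nonneg : 0 ≤ c (l (m + 1)) / l (m + 1) := div_nonneg (hc0 _) hlm1_pos.le
  calc c n / n ≤ c (l (m + 1)) / l m :=
        div_le_div₀ (hc0 _) (hc (lt_apply_blockIndex_succ hl n).le) hlm_pos hlm_le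
    _ ≤ C * (c (l (m + 1)) / l (m + 1)) := by
        rw [div_le_iff₀ hlm_pos]
        calc c (l (m + 1)) = c (l (m + 1)) / l (m + 1) * l (m + 1) :=
              (div_mul_cancel₀ _ hlm1_pos.ne').symm
          _ ≤ c (l (m + 1)) / l (m + 1) * (C * l m) := by gcongr
          _ = C * (c (l (m + 1)) / l (m + 1)) * l m := by ring

theorem monotone_card_filter_Icc (p : ℕ → Prop) [DecidablePred p] :
    Monotone fun n => #{k ∈ Icc 1 n | p k} :=
  fun _ _ h => card_le_card (filter_subset_filter _ (Icc_subset_Icc_right h))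

theorem tendsto_card_filter_Icc_div_iff (p : ℕ → Prop) [DecidablePred p] {l : ℕ → ℕ}
    (hl : StrictMono l) {C : ℝ} (hC : ∀ᶠ m in atTop, (l (m + 1) : ℝ) ≤ C * l m) :
    Tendsto (fun n => (#{k ∈ Icc 1 n | p k} : ℝ) / n) atTop (𝓝 0) ↔
      Tendsto (fun n => (#{k ∈ Icc 1 (l n) | p k} : ℝ) / l n) atTop (𝓝 0) :=
  ⟨fun h => h.comp hl.tendsto_atTop,
    tendsto_div_of_tendsto_comp_div (c := fun n => (#{k ∈ Icc 1 n | p k} : ℝ))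
      (Nat.mono_cast.comp (monotone_card_filter_Icc p)) (fun _ => Nat.cast_nonneg _) hl hC⟩

theorem stmt_6_general {X : Type*} [MetricSpace X] (A : ℕ → Set X) (S : Set X)
    (l : ℕ → ℕ) (hl : StrictMono l)
    (hlim : Filter.limsup (fun n => (l (n + 1) : ℝ) / (l n : ℝ)) atTop = 1) :
    (∀ ε > (0 : ℝ), ∀ x : X, Tendsto
      (fun n => (((Finset.Icc 1 n).filter
        (fun k => ε ≤ |infDist x (A k) - infDist x S|)).card : ℝ) / (n : ℝ))
      atTop (nhds 0)) ↔
    (∀ ε > (0 : ℝ), ∀ x : X, Tendsto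
      (fun n => (((Finset.Icc 1 (l n)).filter
        (fun k => ε ≤ |infDist x (A k) - infDist x S|)).card : ℝ) / (l n : ℝ))
      atTop (nhds 0)) :=
  forall₂_congr fun _ _ => forall_congr' fun _ =>
    tendsto_card_filter_Icc_div_iff _ hl (hl.eventually_apply_succ_le_mul hlim one_lt_two)

theorem stmt_6 {X : Type*} [MetricSpace X] (A : ℕ → Set X) (S : Set X)
    (hA : ∀ k, (A k).Nonempty ∧ IsClosed (A k)) (hS : S.Nonempty) (hSc : IsClosed S)
    (hbdd : ∀ x : X, ∃ M : ℝ, ∀ k, infDist x (A k) ≤ M)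
    (l : ℕ → ℕ) (hl : StrictMono l) (hl1 : ∀ n, 1 ≤ l n)
    (hlim : Filter.limsup (fun n => (l (n + 1) : ℝ) / (l n : ℝ)) atTop = 1) :
    (∀ ε > (0 : ℝ), ∀ x : X, Tendsto
      (fun n => (((Finset.Icc 1 n).filter
        (fun k => ε ≤ |infDist x (A k) - infDist x S|)).card : ℝ) / (n : ℝ))
      atTop (nhds 0)) ↔
    (∀ ε > (0 : ℝ), ∀ x : X, Tendsto
      (fun n => (((Finset.Icc 1 (l n)).filter
        (fun k => ε ≤ |infDist x (A k) - infDist x S|)).card : ℝ) / (l n : ℝ))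
      atTop (nhds 0)) :=
  stmt_6_general A S l hl hlim
end

section
/- Let (X,ρ) be a metric space, I an admissible ideal on ℕ, λ a strictly increasing sequence of positive integers, and p > 0. If a sequence {A_k} of nonempty closed subsets of X is Wijsman p-strongly I-C_λ summable to A, then it is Wijsman I-C_λ statistically convergent to A. -/
/-!
Markov's inequality: among the `k ≤ λ(n)`, at most `ε ^ (-p) · ∑ |d(x, A_k) - d(x, A)| ^ p` satisfy
`|d(x, A_k) - d(x, A)| ≥ ε`. Hence every `n` at which the density of such `k` is at least `δ` has
`p`-th power mean at least `ε ^ p · δ`, and the ideal is closed under subsets.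
-/

open Metric

namespace Finset

theorem mul_card_filter_le_sum {ι : Type*} (s : Finset ι) (g : ι → ℝ)
    (hg : ∀ k ∈ s, 0 ≤ g k) (t : ℝ) :
    t * #(s.filter (t ≤ g ·)) ≤ ∑ k ∈ s, g k :=
  calc t * #(s.filter (t ≤ g ·)) = ∑ _k ∈ s.filter (t ≤ g ·), t := by
        rw [sum_const, nsmul_eq_mul, mul_comm]
    _ ≤ ∑ k ∈ s.filter (t ≤ g ·), g k := sum_le_sum fun k hk => (mem_filter.mp hk).2
    _ ≤ ∑ k ∈ s, g k := sum_le_sum_of_subset_of_nonneg (filter_subset _ _)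
        fun k hk _ => hg k hk

theorem rpow_mul_card_filter_le_sum_abs_rpow {ι : Type*} (s : Finset ι) (f : ι → ℝ)
    {ε p : ℝ} (hε : 0 ≤ ε) (hp : 0 ≤ p) :
    ε ^ p * #(s.filter (ε ≤ |f ·|)) ≤ ∑ k ∈ s, |f k| ^ p := by
  have hsubset : s.filter (ε ≤ |f ·|) ⊆ s.filter (ε ^ p ≤ |f ·| ^ p) :=
    monotone_filter_right s fun _ _ hk => Real.rpow_le_rpow hε hk hp
  calc ε ^ p * #(s.filter (ε ≤ |f ·|)) ≤ ε ^ p * #(s.filter (ε ^ p ≤ |f ·| ^ p)) := by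
        gcongr
    _ ≤ ∑ k ∈ s, |f k| ^ p :=
        s.mul_card_filter_le_sum _ (fun k _ => Real.rpow_nonneg (abs_nonneg _) p) _

end Finset

theorem rpow_mul_density_le_mean_abs_rpow {ι : Type*} (s : Finset ι) (f : ι → ℝ) (L : ℝ)
    (hL : 0 ≤ L) {ε p : ℝ} (hε : 0 ≤ ε) (hp : 0 ≤ p) :
    ε ^ p * (((s.filter (ε ≤ |f ·|)).card : ℝ) / L) ≤ (1 / L) * ∑ k ∈ s, |f k| ^ p := by
  rw [mul_div_assoc', one_div_mul_eq_div]
  exact div_le_div_of_nonneg_right (s.rpow_mul_card_filter_le_sum_abs_rpow f hε hp) hL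

theorem stmt_10_general {X : Type*} [MetricSpace X] (A : ℕ → Set X) (S : Set X)
    (I : Set (Set ℕ))
    (hsub : ∀ ⦃a b : Set ℕ⦄, a ∈ I → b ⊆ a → b ∈ I)
    (l : ℕ → ℕ)
    (p : ℝ) (hp : 0 < p)
    (hstrong : ∀ ε > (0 : ℝ), ∀ x : X,
      {n : ℕ | ε ≤ (1 / (l n : ℝ)) *
        ∑ k ∈ Finset.Icc 1 (l n), |infDist x (A k) - infDist x S| ^ p} ∈ I) :
    ∀ ε > (0 : ℝ), ∀ δ > (0 : ℝ), ∀ x : X,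
      {n : ℕ | δ ≤ (((Finset.Icc 1 (l n)).filter
        (fun k => ε ≤ |infDist x (A k) - infDist x S|)).card : ℝ) / (l n : ℝ)} ∈ I := by
  intro ε hε δ hδ x
  have hεp : 0 < ε ^ p := Real.rpow_pos_of_pos hε p
  refine hsub (hstrong (ε ^ p * δ) (mul_pos hεp hδ) x) fun n hn => ?_
  exact (mul_le_mul_of_nonneg_left hn hεp.le).trans
    (rpow_mul_density_le_mean_abs_rpow _ _ _ (Nat.cast_nonneg _) hε.le hp.le)

theorem stmt_10 {X : Type*} [MetricSpace X] (A : ℕ → Set X) (S : Set X)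
    (hA : ∀ k, (A k).Nonempty ∧ IsClosed (A k)) (hS : S.Nonempty) (hSc : IsClosed S)
    (I : Set (Set ℕ)) (hempty : ∅ ∈ I)
    (hsub : ∀ ⦃a b : Set ℕ⦄, a ∈ I → b ⊆ a → b ∈ I)
    (hunion : ∀ ⦃a b : Set ℕ⦄, a ∈ I → b ∈ I → a ∪ b ∈ I)
    (huniv : (Set.univ : Set ℕ) ∉ I) (hsing : ∀ n : ℕ, ({n} : Set ℕ) ∈ I)
    (l : ℕ → ℕ) (hl : StrictMono l) (hl1 : ∀ n, 1 ≤ l n)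
    (p : ℝ) (hp : 0 < p)
    (hstrong : ∀ ε > (0 : ℝ), ∀ x : X,
      {n : ℕ | ε ≤ (1 / (l n : ℝ)) *
        ∑ k ∈ Finset.Icc 1 (l n), |infDist x (A k) - infDist x S| ^ p} ∈ I) :
    ∀ ε > (0 : ℝ), ∀ δ > (0 : ℝ), ∀ x : X,
      {n : ℕ | δ ≤ (((Finset.Icc 1 (l n)).filter
        (fun k => ε ≤ |infDist x (A k) - infDist x S|)).card : ℝ) / (l n : ℝ)} ∈ I :=
  stmt_10_general A S I hsub l p hp hstrong
end

section
/- Let (X,ρ) be a metric space, I an admissible ideal on ℕ, λ a strictly increasing sequence of positive integers, p > 0, and {A_k} a bounded sequence of nonempty closed subsets of X. If {A_k} is Wijsman I-C_λ statistically convergent to A, then {A_k} is Wijsman p-strongly I-C_λ summable to A. -/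
/-! Split the average of `|d(x,A_k) - d(x,A)|^p` over `k ≤ λ(n)` according to whether a term
reaches `ε/2`. The small terms contribute less than `ε/2` to the average, and each large term is
below `α^p`; large terms are exactly those with `|d(x,A_k) - d(x,A)| ≥ (ε/2)^(1/p)`. So an average
`≥ ε` forces their density to be `≥ ε/(2α^p)`, and the set of such `n` lies in `I`. -/

open Filter Metric Finset

theorem Finset.sum_le_card_filter_mul_add {ι : Type*} (F : Finset ι) (f : ι → ℝ) {M η : ℝ}
    (hη : 0 ≤ η) (hf : ∀ k ∈ F, f k ≤ M) :
    ∑ k ∈ F, f k ≤ #{k ∈ F | η ≤ f k} * M + #F * η := by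
  rw [← sum_filter_add_sum_filter_not F (η ≤ f ·)]
  have hlarge : ∑ k ∈ F with η ≤ f k, f k ≤ #{k ∈ F | η ≤ f k} * M := by
    simpa using sum_le_card_nsmul _ f M fun k hk => hf k (mem_filter.1 hk).1
  have hsmall : ∑ k ∈ F with ¬η ≤ f k, f k ≤ #F * η :=
    calc ∑ k ∈ F with ¬η ≤ f k, f k ≤ #{k ∈ F | ¬η ≤ f k} * η := by
          simpa using sum_le_card_nsmul _ f η fun k hk => (not_le.1 (mem_filter.1 hk).2).le
      _ ≤ #F * η := by gcongr; exact filter_subset _ F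
  linarith

theorem Finset.average_le_density_mul_add {ι : Type*} (F : Finset ι) (f : ι → ℝ) {M η : ℝ}
    (hη : 0 ≤ η) (hf : ∀ k ∈ F, f k ≤ M) :
    1 / (#F : ℝ) * ∑ k ∈ F, f k ≤ #{k ∈ F | η ≤ f k} / (#F : ℝ) * M + η := by
  rcases F.eq_empty_or_nonempty with rfl | hF
  · simpa using hη
  have hcard : (0 : ℝ) < #F := by exact_mod_cast hF.card_pos
  calc 1 / (#F : ℝ) * ∑ k ∈ F, f k ≤ 1 / (#F : ℝ) * (#{k ∈ F | η ≤ f k} * M + #F * η) := by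
        gcongr; exact sum_le_card_filter_mul_add F f hη hf
    _ = #{k ∈ F | η ≤ f k} / (#F : ℝ) * M + η := by field_simp

theorem Finset.density_ge_of_average_rpow_ge {ι : Type*} (F : Finset ι) (u : ι → ℝ)
    {α p ε : ℝ} (hα : 0 < α) (hp : 0 < p) (hε : 0 < ε) (hu : ∀ k ∈ F, |u k| ≤ α)
    (h : ε ≤ 1 / (#F : ℝ) * ∑ k ∈ F, |u k| ^ p) :
    ε / (2 * α ^ p) ≤ #{k ∈ F | (ε / 2) ^ p⁻¹ ≤ |u k|} / (#F : ℝ) := by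
  have hfilter : {k ∈ F | (ε / 2) ^ p⁻¹ ≤ |u k|} = {k ∈ F | ε / 2 ≤ |u k| ^ p} :=
    filter_congr fun k _ => Real.rpow_inv_le_iff_of_pos (by positivity) (abs_nonneg _) hp
  have havg := average_le_density_mul_add F (|u ·| ^ p) (M := α ^ p) (η := ε / 2)
    (by positivity) fun k hk => Real.rpow_le_rpow (abs_nonneg _) (hu k hk) hp.le
  rw [hfilter, div_le_iff₀ (by positivity)]
  linarith

theorem stmt_11_general {X : Type*} [MetricSpace X] (A : ℕ → Set X) (S : Set X)
    (I : Set (Set ℕ))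
    (hsub : ∀ ⦃a b : Set ℕ⦄, a ∈ I → b ⊆ a → b ∈ I)
    (l : ℕ → ℕ)
    (p : ℝ) (hp : 0 < p)
    (hbdd : ∀ x : X, ∃ α > (0 : ℝ), ∀ k, |infDist x (A k) - infDist x S| < α)
    (hstat : ∀ ε > (0 : ℝ), ∀ δ > (0 : ℝ), ∀ x : X,
      {n : ℕ | δ ≤ (((Finset.Icc 1 (l n)).filter
        (fun k => ε ≤ |infDist x (A k) - infDist x S|)).card : ℝ) / (l n : ℝ)} ∈ I) :
    ∀ ε > (0 : ℝ), ∀ x : X,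
      {n : ℕ | ε ≤ (1 / (l n : ℝ)) *
        ∑ k ∈ Finset.Icc 1 (l n), |infDist x (A k) - infDist x S| ^ p} ∈ I := by
  intro ε hε x
  obtain ⟨α, hα, hαk⟩ := hbdd x
  refine hsub (hstat ((ε / 2) ^ p⁻¹) (by positivity) (ε / (2 * α ^ p)) (by positivity) x)
    fun n hn => ?_
  have hcard : (#(Icc 1 (l n)) : ℝ) = l n := by simp
  have := density_ge_of_average_rpow_ge (Icc 1 (l n)) (fun k => infDist x (A k) - infDist x S)
    hα hp hε (fun k _ => (hαk k).le) (by rwa [hcard])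
  rwa [hcard] at this

theorem stmt_11 {X : Type*} [MetricSpace X] (A : ℕ → Set X) (S : Set X)
    (hA : ∀ k, (A k).Nonempty ∧ IsClosed (A k)) (hS : S.Nonempty) (hSc : IsClosed S)
    (I : Set (Set ℕ)) (hempty : ∅ ∈ I)
    (hsub : ∀ ⦃a b : Set ℕ⦄, a ∈ I → b ⊆ a → b ∈ I)
    (hunion : ∀ ⦃a b : Set ℕ⦄, a ∈ I → b ∈ I → a ∪ b ∈ I)
    (huniv : (Set.univ : Set ℕ) ∉ I) (hsing : ∀ n : ℕ, ({n} : Set ℕ) ∈ I)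
    (l : ℕ → ℕ) (hl : StrictMono l) (hl1 : ∀ n, 1 ≤ l n)
    (p : ℝ) (hp : 0 < p)
    (hbdd : ∀ x : X, ∃ α > (0 : ℝ), ∀ k, |infDist x (A k) - infDist x S| < α)
    (hstat : ∀ ε > (0 : ℝ), ∀ δ > (0 : ℝ), ∀ x : X,
      {n : ℕ | δ ≤ (((Finset.Icc 1 (l n)).filter
        (fun k => ε ≤ |infDist x (A k) - infDist x S|)).card : ℝ) / (l n : ℝ)} ∈ I) :
    ∀ ε > (0 : ℝ), ∀ x : X,
      {n : ℕ | ε ≤ (1 / (l n : ℝ)) *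
        ∑ k ∈ Finset.Icc 1 (l n), |infDist x (A k) - infDist x S| ^ p} ∈ I :=
  stmt_11_general A S I hsub l p hp hbdd hstat
end
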